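/- Let G be a regular graph admitting a local antimagic labeling, and n ≥ 3. Then χ(G[O_n]) ≤ χ_la(G[O_n]) ≤ χ_la(G). Moreover if χ(G) = χ_la(G), then χ_la(G[O_n]) = χ_la(G). -/

import Mathlib

open scoped BigOperators

namespace LocalAntimagic

variable {V : Type*}

/-- The size (number of edges) of a graph. -/
noncomputable def esize (G : SimpleGraph V) : ℕ := G.edgeSet.ncard

/-- The induced vertex sum `f⁺(v)`: sum of labels of edges incident to `v`. -/
noncomputable def vsum (G : SimpleGraph V) (f : Sym2 V → ℕ) (v : V) : ℕ :=
  ∑ᶠ e ∈ G.incidenceSet v, f e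

/-- `f` is a local antimagic labeling of `G`: a bijection from the edge set onto
`{1, …, q}` such that adjacent vertices get distinct induced sums. -/
def IsLocalAntimagic (G : SimpleGraph V) (f : Sym2 V → ℕ) : Prop :=
  Set.BijOn f G.edgeSet (Set.Icc 1 (esize G)) ∧
    ∀ ⦃u v : V⦄, G.Adj u v → vsum G f u ≠ vsum G f v

/-- The number of distinct induced vertex colors of the labeling `f`. -/
noncomputable def colors (G : SimpleGraph V) (f : Sym2 V → ℕ) : ℕ :=
  (Set.range (vsum G f)).ncard

/-- The local antimagic chromatic number `χ_la(G)`. -/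
noncomputable def chiLA (G : SimpleGraph V) : ℕ :=
  sInf {c | ∃ f : Sym2 V → ℕ, IsLocalAntimagic G f ∧ colors G f = c}

end LocalAntimagic
/-- The lexicographic product `G[O_n]` of `G` with the null graph of order `n`:
vertex set `V × Fin n`, with `(u, i)` adjacent to `(v, j)` iff `u` is adjacent to `v`. -/
def lexO {V : Type*} (G : SimpleGraph V) (n : ℕ) : SimpleGraph (V × Fin n) where
  Adj p q := G.Adj p.1 q.1
  symm := ⟨fun _ _ h => G.adj_symm h⟩
  loopless := ⟨fun p h => G.irrefl h⟩

open Finset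

/-- A semimagic square of order `n`: entries (on `[0,n)×[0,n)`) are a bijection onto
`{1,…,n²}` and all row sums and column sums equal `S`. -/
def Semimagic (n : ℕ) (A : ℕ → ℕ → ℕ) (S : ℕ) : Prop :=
  (∀ i < n, ∀ j < n, 1 ≤ A i j ∧ A i j ≤ n * n) ∧
  (∀ i < n, ∀ j < n, ∀ i' < n, ∀ j' < n, A i j = A i' j' → i = i' ∧ j = j') ∧
  (∀ i < n, ∑ j ∈ range n, A i j = S) ∧
  (∀ j < n, ∑ i ∈ range n, A i j = S)

/-- Division-uniqueness helper. -/
lemma block_uniq {m x y a b : ℕ} (ha1 : 1 ≤ a) (ha2 : a ≤ m) (hb1 : 1 ≤ b) (hb2 : b ≤ m)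
    (h : m * x + a = m * y + b) : x = y ∧ a = b := by
  rcases lt_trichotomy x y with h' | h' | h'
  · exfalso
    have : m * (x + 1) ≤ m * y := Nat.mul_le_mul_left m h'
    rw [Nat.mul_add] at this; omega
  · subst h'; omega
  · exfalso
    have : m * (y + 1) ≤ m * x := Nat.mul_le_mul_left m h'
    rw [Nat.mul_add] at this; omega

lemma sum_ite_lt (m k a b : ℕ) (hk : k ≤ m) :
    ∑ j ∈ range m, (if j < k then a else b) = k * a + (m - k) * b := by
  rw [Finset.sum_ite]
  have h1 : (range m).filter (fun j => j < k) = range k := by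
    ext j; simp only [mem_filter, mem_range]; omega
  have h2 : ((range m).filter (fun j => ¬ j < k)).card = m - k := by
    have := Finset.card_filter_add_card_filter_not (s := range m)
      (p := fun j => j < k)
    rw [h1] at this
    simp only [card_range] at this ⊢
    omega
  rw [h1, Finset.sum_const, Finset.sum_const, h2, card_range, smul_eq_mul, smul_eq_mul]

section OddCase

variable {n : ℕ} [NeZero n]

lemma sum_range_zmod (g : ZMod n → ℕ) :
    ∑ j ∈ range n, g (j : ZMod n) = ∑ z : ZMod n, g z := by
  exact Finset.sum_nbij' (fun j => (j : ZMod n)) (fun z => z.val)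
    (fun a _ => Finset.mem_univ _) (fun z _ => Finset.mem_range.mpr (ZMod.val_lt z))
    (fun a ha => ZMod.val_cast_of_lt (Finset.mem_range.mp ha))
    (fun z _ => ZMod.natCast_rightInverse z) (fun a _ => rfl)

lemma sum_val_equiv (e : ZMod n ≃ ZMod n) :
    ∑ z : ZMod n, (e z).val = ∑ z : ZMod n, z.val :=
  Equiv.sum_comp e (fun z => z.val)

end OddCase

/-- The odd-order semimagic square. -/
lemma semimagic_odd {n : ℕ} (hn : 3 ≤ n) (ho : ¬ 2 ∣ n) :
    ∃ A S, Semimagic n A S := by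
  haveI : NeZero n := ⟨by omega⟩
  set T : ℕ := ∑ z : ZMod n, z.val with hT
  refine ⟨fun i j => n * ((i : ZMod n) + (j : ZMod n)).val + ((i : ZMod n) - (j : ZMod n)).val + 1,
    n * T + T + n, ?_, ?_, ?_, ?_⟩
  · intro i _ j _
    constructor
    · exact Nat.le_add_left 1 _
    · obtain ⟨k, rfl⟩ : ∃ k, n = k + 1 := ⟨n - 1, by omega⟩
      have h1 : ((i : ZMod (k+1)) + (j : ZMod (k+1))).val ≤ k :=
        Nat.lt_succ_iff.mp (ZMod.val_lt _)
      have h2 : ((i : ZMod (k+1)) - (j : ZMod (k+1))).val ≤ k :=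
        Nat.lt_succ_iff.mp (ZMod.val_lt _)
      nlinarith
  · intro i hi j hj i' hi' j' hj' h
    have hu : IsUnit (2 : ZMod n) := by
      rw [show (2 : ZMod n) = ((2 : ℕ) : ZMod n) by norm_cast]
      rw [ZMod.isUnit_iff_coprime]
      exact (Nat.Prime.coprime_iff_not_dvd Nat.prime_two).mpr ho
    have h1 : ((i : ZMod n) - (j : ZMod n)).val + 1 ≤ n := ZMod.val_lt _
    have h1' : ((i' : ZMod n) - (j' : ZMod n)).val + 1 ≤ n := ZMod.val_lt _
    have key : ((i : ZMod n) + (j : ZMod n)).val = ((i' : ZMod n) + (j' : ZMod n)).val ∧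
        ((i : ZMod n) - (j : ZMod n)).val + 1 = ((i' : ZMod n) - (j' : ZMod n)).val + 1 := by
      apply block_uniq (m := n) (by omega) h1 (by omega) h1'
      linarith [h]
    have e1 : (i : ZMod n) + (j : ZMod n) = (i' : ZMod n) + (j' : ZMod n) :=
      ZMod.val_injective n key.1
    have e2 : (i : ZMod n) - (j : ZMod n) = (i' : ZMod n) - (j' : ZMod n) :=
      ZMod.val_injective n (by omega)
    have e3 : (2 : ZMod n) * (i : ZMod n) = 2 * (i' : ZMod n) := by
      linear_combination e1 + e2
    have e4 : (i : ZMod n) = (i' : ZMod n) := hu.mul_left_cancel e3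
    have e5 : (j : ZMod n) = (j' : ZMod n) := by linear_combination e1 - e4
    constructor
    · have := congrArg ZMod.val e4
      rwa [ZMod.val_cast_of_lt hi, ZMod.val_cast_of_lt hi'] at this
    · have := congrArg ZMod.val e5
      rwa [ZMod.val_cast_of_lt hj, ZMod.val_cast_of_lt hj'] at this
  · intro i _
    rw [Finset.sum_add_distrib, Finset.sum_add_distrib, ← Finset.mul_sum]
    have hr : ∑ j ∈ range n, ((i : ZMod n) + (j : ZMod n)).val = T :=
      (sum_range_zmod (fun z => ((i : ZMod n) + z).val)).trans
        (sum_val_equiv (Equiv.addLeft (i : ZMod n)))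
    have hs : ∑ j ∈ range n, ((i : ZMod n) - (j : ZMod n)).val = T :=
      (sum_range_zmod (fun z => ((i : ZMod n) - z).val)).trans
        (sum_val_equiv (Equiv.subLeft (i : ZMod n)))
    rw [hr, hs, Finset.sum_const, card_range, smul_eq_mul, mul_one]
  · intro j _
    rw [Finset.sum_add_distrib, Finset.sum_add_distrib, ← Finset.mul_sum]
    have hr : ∑ i ∈ range n, ((i : ZMod n) + (j : ZMod n)).val = T :=
      (sum_range_zmod (fun z => (z + (j : ZMod n)).val)).trans
        (sum_val_equiv (Equiv.addRight (j : ZMod n)))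
    have hs : ∑ i ∈ range n, ((i : ZMod n) - (j : ZMod n)).val = T :=
      (sum_range_zmod (fun z => (z - (j : ZMod n)).val)).trans
        (sum_val_equiv (Equiv.subRight (j : ZMod n)))
    rw [hr, hs, Finset.sum_const, card_range, smul_eq_mul, mul_one]

/-- An explicit 4×4 semimagic (indeed magic) square. -/
def A4 : ℕ → ℕ → ℕ := fun i j =>
  ([[16,3,2,13],[5,10,11,8],[9,6,7,12],[4,15,14,1]].getD i []).getD j 0

lemma semimagic_four : Semimagic 4 A4 34 := by
  refine ⟨?_, ?_, ?_, ?_⟩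
  · intro i hi j hj
    have H : ∀ i, i < 4 → ∀ j, j < 4 →
        (decide (1 ≤ A4 i j ∧ A4 i j ≤ 4 * 4) = true) := by decide
    exact of_decide_eq_true (H i hi j hj)
  · intro i hi j hj i' hi' j' hj' h
    have H : ∀ i, i < 4 → ∀ j, j < 4 → ∀ i', i' < 4 → ∀ j', j' < 4 →
        (decide (A4 i j = A4 i' j' → i = i' ∧ j = j') = true) := by decide
    exact of_decide_eq_true (H i hi j hj i' hi' j' hj') h
  · intro i hi
    have H : ∀ i, i < 4 → (decide (∑ j ∈ range 4, A4 i j = 34) = true) := by decide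
    exact of_decide_eq_true (H i hi)
  · intro j hj
    have H : ∀ j, j < 4 → (decide (∑ i ∈ range 4, A4 i j = 34) = true) := by decide
    exact of_decide_eq_true (H j hj)

/-- The doubled square. -/
def dbl (m x y : ℕ) (A : ℕ → ℕ → ℕ) : ℕ → ℕ → ℕ := fun i j =>
  A (i % m) (j % m) + m * m *
    (if j < m then (if i < m then (if j < x then 3 else 0) else (if j < x then 0 else 3))
     else (if i < m then (if j < m + y then 2 else 1) else (if j < m + y then 1 else 2)))

lemma semimagic_double {m : ℕ} {A : ℕ → ℕ → ℕ} {S : ℕ} (hm : 2 ≤ m)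
    (h : Semimagic m A S) : ∃ D S', Semimagic (2 * m) D S' := by
  obtain ⟨hb, hinj, hrow, hcol⟩ := h
  set x := (m + 2) / 3 with hxdef
  set y := 2 * m - 3 * x with hydef
  have hx : 3 * x ≤ 2 * m ∧ m ≤ 3 * x ∧ x ≤ m := by omega
  have hy : y ≤ m ∧ 3 * x + y = 2 * m := by omega
  have hmod : ∀ a, a < 2 * m → a % m = if a < m then a else a - m := by
    intro a ha
    split_ifs with h'
    · exact Nat.mod_eq_of_lt h'
    · rw [Nat.mod_eq_sub_mod (by omega), Nat.mod_eq_of_lt (by omega)]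
  refine ⟨dbl m x y A, 2 * S + 3 * (m * m * m), ?_, ?_, ?_, ?_⟩
  · -- bounds
    intro i hi j hj
    have hA := hb (i % m) (Nat.mod_lt _ (by omega)) (j % m) (Nat.mod_lt _ (by omega))
    have hc : (if j < m then (if i < m then (if j < x then 3 else 0)
        else (if j < x then 0 else 3))
        else (if i < m then (if j < m + y then 2 else 1)
        else (if j < m + y then 1 else 2))) ≤ 3 := by
      split_ifs <;> omega
    constructor
    · exact le_trans hA.1 (Nat.le_add_right _ _)
    · have h4 : 2 * m * (2 * m) = m * m + m * m * 3 := by ring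
      rw [dbl, h4]
      exact Nat.add_le_add hA.2 (Nat.mul_le_mul_left _ hc)
  · -- injectivity
    intro i hi j hj i' hi' j' hj' heq
    simp only [dbl] at heq
    have hA1 := hb (i % m) (Nat.mod_lt _ (by omega)) (j % m) (Nat.mod_lt _ (by omega))
    have hA2 := hb (i' % m) (Nat.mod_lt _ (by omega)) (j' % m) (Nat.mod_lt _ (by omega))
    rw [Nat.add_comm (A (i % m) (j % m)), Nat.add_comm (A (i' % m) (j' % m))] at heq
    obtain ⟨hceq, hAeq⟩ := block_uniq hA1.1 hA1.2 hA2.1 hA2.2 heq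
    obtain ⟨hm1, hm2⟩ := hinj (i % m) (Nat.mod_lt _ (by omega)) (j % m)
      (Nat.mod_lt _ (by omega)) (i' % m) (Nat.mod_lt _ (by omega)) (j' % m)
      (Nat.mod_lt _ (by omega)) hAeq
    rw [hmod i hi, hmod i' hi'] at hm1
    rw [hmod j hj, hmod j' hj'] at hm2
    split_ifs at hceq hm1 hm2 <;> omega
  · -- row sums
    intro i hi
    rw [two_mul, Finset.sum_range_add]
    by_cases hi2 : i < m
    · have e1 : ∀ j ∈ range m, dbl m x y A i j
          = A i j + m * m * (if j < x then 3 else 0) := by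
        intro j hj
        have hjm := Finset.mem_range.mp hj
        rw [dbl, Nat.mod_eq_of_lt hi2, Nat.mod_eq_of_lt hjm, if_pos hjm, if_pos hi2]
      have e2 : ∀ j ∈ range m, dbl m x y A i (m + j)
          = A i j + m * m * (if j < y then 2 else 1) := by
        intro j hj
        have hjm := Finset.mem_range.mp hj
        rw [dbl, Nat.mod_eq_of_lt hi2, Nat.add_mod_left, Nat.mod_eq_of_lt hjm,
          if_neg (by omega), if_pos hi2]
        simp only [Nat.add_lt_add_iff_left]
      rw [Finset.sum_congr rfl e1, Finset.sum_congr rfl e2,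
        Finset.sum_add_distrib, Finset.sum_add_distrib, ← Finset.mul_sum, ← Finset.mul_sum,
        sum_ite_lt m x 3 0 hx.2.2, sum_ite_lt m y 2 1 hy.1, hrow i hi2]
      have harith : m * m * (x * 3 + (m - x) * 0) + m * m * (y * 2 + (m - y) * 1)
          = 3 * (m * m * m) := by
        rw [← Nat.mul_add, show x * 3 + (m - x) * 0 + (y * 2 + (m - y) * 1) = 3 * m by omega]
        ring
      linarith [harith]
    · have e1 : ∀ j ∈ range m, dbl m x y A i j
          = A (i - m) j + m * m * (if j < x then 0 else 3) := by
        intro j hj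
        have hjm := Finset.mem_range.mp hj
        rw [dbl, hmod i hi, if_neg hi2, Nat.mod_eq_of_lt hjm, if_pos hjm, if_neg hi2]
      have e2 : ∀ j ∈ range m, dbl m x y A i (m + j)
          = A (i - m) j + m * m * (if j < y then 1 else 2) := by
        intro j hj
        have hjm := Finset.mem_range.mp hj
        rw [dbl, hmod i hi, if_neg hi2, Nat.add_mod_left, Nat.mod_eq_of_lt hjm,
          if_neg (by omega), if_neg hi2]
        simp only [Nat.add_lt_add_iff_left]
      rw [Finset.sum_congr rfl e1, Finset.sum_congr rfl e2,
        Finset.sum_add_distrib, Finset.sum_add_distrib, ← Finset.mul_sum, ← Finset.mul_sum,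
        sum_ite_lt m x 0 3 hx.2.2, sum_ite_lt m y 1 2 hy.1, hrow (i - m) (by omega)]
      have harith : m * m * (x * 0 + (m - x) * 3) + m * m * (y * 1 + (m - y) * 2)
          = 3 * (m * m * m) := by
        rw [← Nat.mul_add, show x * 0 + (m - x) * 3 + (y * 1 + (m - y) * 2) = 3 * m by omega]
        ring
      linarith [harith]
  · -- column sums
    intro j hj
    rw [two_mul, Finset.sum_range_add]
    have harith : ∀ c1 c2 : ℕ, c1 + c2 = 3 →
        S + m * (m * m * c1) + (S + m * (m * m * c2)) = 2 * S + 3 * (m * m * m) := by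
      intro c1 c2 hc
      have : m * (m * m * c1) + m * (m * m * c2) = (m * m * m) * (c1 + c2) := by ring
      rw [hc] at this
      linarith [this]
    by_cases hj2 : j < m
    · have e1 : ∀ i ∈ range m, dbl m x y A i j
          = A i j + m * m * (if j < x then 3 else 0) := by
        intro i hi
        have him := Finset.mem_range.mp hi
        rw [dbl, Nat.mod_eq_of_lt him, Nat.mod_eq_of_lt hj2, if_pos hj2, if_pos him]
      have e2 : ∀ i ∈ range m, dbl m x y A (m + i) j
          = A i j + m * m * (if j < x then 0 else 3) := by
        intro i hi
        have him := Finset.mem_range.mp hi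
        rw [dbl, Nat.add_mod_left, Nat.mod_eq_of_lt him, Nat.mod_eq_of_lt hj2,
          if_pos hj2, if_neg (by omega)]
      rw [Finset.sum_congr rfl e1, Finset.sum_congr rfl e2,
        Finset.sum_add_distrib, Finset.sum_add_distrib,
        Finset.sum_const, Finset.sum_const, card_range, smul_eq_mul, smul_eq_mul,
        hcol j hj2]
      exact harith _ _ (by split_ifs <;> omega)
    · have e1 : ∀ i ∈ range m, dbl m x y A i j
          = A i (j - m) + m * m * (if j < m + y then 2 else 1) := by
        intro i hi
        have him := Finset.mem_range.mp hi
        rw [dbl, Nat.mod_eq_of_lt him, hmod j hj, if_neg hj2, if_neg hj2, if_pos him]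
      have e2 : ∀ i ∈ range m, dbl m x y A (m + i) j
          = A i (j - m) + m * m * (if j < m + y then 1 else 2) := by
        intro i hi
        have him := Finset.mem_range.mp hi
        rw [dbl, Nat.add_mod_left, Nat.mod_eq_of_lt him, hmod j hj, if_neg hj2,
          if_neg hj2, if_neg (by omega)]
      rw [Finset.sum_congr rfl e1, Finset.sum_congr rfl e2,
        Finset.sum_add_distrib, Finset.sum_add_distrib,
        Finset.sum_const, Finset.sum_const, card_range, smul_eq_mul, smul_eq_mul,
        hcol (j - m) (by omega)]
      exact harith _ _ (by split_ifs <;> omega)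

/-- Semimagic squares exist for every order `n ≥ 3`. -/
theorem semimagic_exists : ∀ n, 3 ≤ n → ∃ A S, Semimagic n A S := by
  intro n
  induction n using Nat.strong_induction_on with
  | _ n ih =>
    intro hn
    rcases Nat.even_or_odd n with he | ho
    · obtain ⟨m, rfl⟩ := he
      have hm2 : 2 ≤ m := by omega
      by_cases hm : m = 2
      · subst hm
        exact ⟨A4, 34, semimagic_four⟩
      · obtain ⟨A, S, hA⟩ := ih m (by omega) (by omega)
        rw [show m + m = 2 * m by ring]
        exact semimagic_double hm2 hA
    · refine semimagic_odd hn ?_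
      rcases ho with ⟨k, rfl⟩
      omega

lemma Semimagic.surj {n : ℕ} {A : ℕ → ℕ → ℕ} {S : ℕ} (h : Semimagic n A S) :
    ∀ a, 1 ≤ a → a ≤ n * n → ∃ i j, i < n ∧ j < n ∧ A i j = a := by
  intro a ha1 ha2
  classical
  set s : Finset (ℕ × ℕ) := (range n) ×ˢ (range n) with hs
  have hsub : s.image (fun p : ℕ × ℕ => A p.1 p.2) ⊆ Finset.Icc 1 (n * n) := by
    intro b hb
    obtain ⟨p, hp, rfl⟩ := Finset.mem_image.mp hb
    rw [Finset.mem_product, Finset.mem_range, Finset.mem_range] at hp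
    have := h.1 p.1 hp.1 p.2 hp.2
    rw [Finset.mem_Icc]
    omega
  have hcard : (s.image (fun p : ℕ × ℕ => A p.1 p.2)).card = n * n := by
    rw [Finset.card_image_of_injOn, hs, Finset.card_product, Finset.card_range]
    intro p hp q hq hpq
    simp only [hs, Finset.coe_product, Set.mem_prod, Finset.coe_range, Set.mem_Iio] at hp hq
    have := h.2.1 p.1 hp.1 p.2 hp.2 q.1 hq.1 q.2 hq.2 hpq
    exact Prod.ext this.1 this.2
  have heq : s.image (fun p : ℕ × ℕ => A p.1 p.2) = Finset.Icc 1 (n * n) :=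
    Finset.eq_of_subset_of_card_le hsub (by rw [Nat.card_Icc, hcard]; omega)
  have : a ∈ s.image (fun p : ℕ × ℕ => A p.1 p.2) := by
    rw [heq, Finset.mem_Icc]; omega
  obtain ⟨p, hp, hpa⟩ := Finset.mem_image.mp this
  rw [Finset.mem_product, Finset.mem_range, Finset.mem_range] at hp
  exact ⟨p.1, p.2, hp.1, hp.2, hpa⟩

namespace LocalAntimagic

lemma incidenceSet_eq_image {W : Type*} (G : SimpleGraph W) (w : W) :
    G.incidenceSet w = (fun v => s(w, v)) '' (G.neighborSet w) := by
  ext e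
  constructor
  · intro he
    refine ⟨Sym2.Mem.other he.2, ?_, Sym2.other_spec he.2⟩
    have := Sym2.other_spec he.2
    have hadj : G.Adj w (Sym2.Mem.other he.2) := by
      rw [← SimpleGraph.mem_edgeSet, this]
      exact he.1
    exact hadj
  · rintro ⟨v, hv, rfl⟩
    exact G.mem_incidence_iff_neighbor.mpr hv

lemma mk_left_injOn {W : Type*} (w : W) (s : Set W) :
    Set.InjOn (fun v => s(w, v)) s := by
  intro a _ b _ h
  simp only [Sym2.eq, Sym2.rel_iff', Prod.mk.injEq, Prod.swap_prod_mk] at h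
  rcases h with ⟨_, rfl⟩ | ⟨rfl, rfl⟩ <;> rfl

lemma vsum_eq {W : Type*} (K : SimpleGraph W) (F : Sym2 W → ℕ) (w : W)
    (t : Finset W) (ht : ↑t = K.neighborSet w) :
    vsum K F w = ∑ v ∈ t, F s(w, v) := by
  rw [vsum, incidenceSet_eq_image, finsum_mem_image (mk_left_injOn w _), ← ht,
    finsum_mem_coe_finset]

end LocalAntimagic

namespace LocalAntimagic

lemma lexO_neighborSet {V : Type*} (G : SimpleGraph V) (n : ℕ) (u : V) (i : Fin n) :
    (lexO G n).neighborSet (u, i) = (G.neighborSet u) ×ˢ (Set.univ : Set (Fin n)) := by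
  ext ⟨v, j⟩
  simp only [SimpleGraph.mem_neighborSet, Set.mem_prod, Set.mem_univ, and_true]
  rfl

lemma construct {V : Type*} [Fintype V] (G : SimpleGraph V) (r n : ℕ) (hn : 3 ≤ n)
    (hreg : ∀ v : V, (G.neighborSet v).ncard = r) {f : Sym2 V → ℕ}
    (hf : IsLocalAntimagic G f) :
    ∃ F : Sym2 (V × Fin n) → ℕ, IsLocalAntimagic (lexO G n) F ∧
      colors (lexO G n) F = colors G f := by
  classical
  obtain ⟨A, S, hA⟩ := semimagic_exists n hn
  letI : LinearOrder V := LinearOrder.lift' (fun v => Fintype.equivFin V v)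
    (Fintype.equivFin V).injective
  set q := esize G with hq
  have hfb : ∀ e ∈ G.edgeSet, 1 ≤ f e ∧ f e ≤ q := by
    intro e he
    have := hf.1.1 he
    rw [Set.mem_Icc] at this
    exact this
  -- the labeling
  set g : (V × Fin n) → (V × Fin n) → ℕ := fun p p' =>
    if p.1 < p'.1 then n * n * (f s(p.1, p'.1) - 1) + A p.2 p'.2
    else if p'.1 < p.1 then n * n * (f s(p.1, p'.1) - 1) + A p'.2 p.2
    else 0 with hg
  have hgsymm : ∀ p p', g p p' = g p' p := by
    intro p p'
    simp only [hg]
    split_ifs with h1 h2 <;>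
      first
        | rfl
        | exact absurd ‹p'.1 < p.1› (lt_asymm ‹p.1 < p'.1›)
        | rw [Sym2.eq_swap]
  set F : Sym2 (V × Fin n) → ℕ := Sym2.lift ⟨g, hgsymm⟩ with hF
  have hFeval : ∀ (u v : V) (i j : Fin n), u < v →
      F s((u, i), (v, j)) = n * n * (f s(u, v) - 1) + A i j := by
    intro u v i j huv
    rw [hF, Sym2.lift_mk]
    simp only [hg]
    rw [if_pos huv]
  have hshape : ∀ e ∈ (lexO G n).edgeSet, ∃ (u v : V) (i j : Fin n),
      u < v ∧ G.Adj u v ∧ e = s((u, i), (v, j)) := by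
    intro e
    induction e with
    | _ p p' =>
      intro he
      rw [SimpleGraph.mem_edgeSet] at he
      have he' : G.Adj p.1 p'.1 := he
      rcases lt_trichotomy p.1 p'.1 with h | h | h
      · exact ⟨p.1, p'.1, p.2, p'.2, h, he', by simp⟩
      · exact absurd h he'.ne
      · exact ⟨p'.1, p.1, p'.2, p.2, h, he'.symm, by rw [Sym2.eq_swap]⟩
  have hshapeG : ∀ e ∈ G.edgeSet, ∃ u v : V, u < v ∧ G.Adj u v ∧ e = s(u, v) := by
    intro e
    induction e with
    | _ a b =>
      intro he
      rw [SimpleGraph.mem_edgeSet] at he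
      rcases lt_trichotomy a b with h | h | h
      · exact ⟨a, b, h, he, rfl⟩
      · exact absurd h he.ne
      · exact ⟨b, a, h, he.symm, Sym2.eq_swap⟩
  have hmapsTo : Set.MapsTo F (lexO G n).edgeSet (Set.Icc 1 (q * (n * n))) := by
    intro e he
    obtain ⟨u, v, i, j, huv, hadj, rfl⟩ := hshape e he
    rw [hFeval u v i j huv, Set.mem_Icc]
    have hfe := hfb s(u, v) ((G.mem_edgeSet).mpr hadj)
    have hAb := hA.1 i i.isLt j j.isLt
    refine ⟨le_trans hAb.1 (Nat.le_add_left _ _), ?_⟩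
    have h1 : n * n * (f s(u, v) - 1) ≤ n * n * (q - 1) :=
      Nat.mul_le_mul_left _ (by omega)
    have hq1 : 1 ≤ q := le_trans hfe.1 hfe.2
    obtain ⟨q', hq2⟩ : ∃ q', q = 1 + q' := ⟨q - 1, by omega⟩
    have h2 : n * n * (q - 1) + n * n = q * (n * n) := by
      rw [hq2, Nat.add_sub_cancel_left]
      ring
    linarith [hAb.2]
  have hinjOn : Set.InjOn F (lexO G n).edgeSet := by
    intro e1 h1 e2 h2 heq
    obtain ⟨u1, v1, i1, j1, h1lt, h1adj, rfl⟩ := hshape e1 h1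
    obtain ⟨u2, v2, i2, j2, h2lt, h2adj, rfl⟩ := hshape e2 h2
    rw [hFeval _ _ _ _ h1lt, hFeval _ _ _ _ h2lt] at heq
    have hA1 := hA.1 i1 i1.isLt j1 j1.isLt
    have hA2 := hA.1 i2 i2.isLt j2 j2.isLt
    have hf1 := hfb s(u1, v1) ((G.mem_edgeSet).mpr h1adj)
    have hf2 := hfb s(u2, v2) ((G.mem_edgeSet).mpr h2adj)
    obtain ⟨hc, ha⟩ := block_uniq hA1.1 hA1.2 hA2.1 hA2.2 heq
    have hfe : f s(u1, v1) = f s(u2, v2) := by omega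
    have hedge : s(u1, v1) = s(u2, v2) :=
      hf.1.2.1 ((G.mem_edgeSet).mpr h1adj) ((G.mem_edgeSet).mpr h2adj) hfe
    rw [Sym2.eq_iff] at hedge
    obtain ⟨rfl, rfl⟩ : u1 = u2 ∧ v1 = v2 := by
      rcases hedge with h | ⟨h3, h4⟩
      · exact h
      · subst h3; subst h4
        exact absurd h1lt (lt_asymm h2lt)
    obtain ⟨hii, hjj⟩ := hA.2.1 i1 i1.isLt j1 j1.isLt i2 i2.isLt j2 j2.isLt ha
    rw [Fin.val_injective hii, Fin.val_injective hjj]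
  have hsurjOn : Set.SurjOn F (lexO G n).edgeSet (Set.Icc 1 (q * (n * n))) := by
    intro k hk
    rw [Set.mem_Icc] at hk
    have hn2 : 0 < n * n := by positivity
    obtain ⟨c, b, hdm, hblt⟩ : ∃ c b, n * n * c + b = k - 1 ∧ b < n * n :=
      ⟨(k - 1) / (n * n), (k - 1) % (n * n), Nat.div_add_mod _ _, Nat.mod_lt _ hn2⟩
    have hk' : k - 1 + 1 = k := by omega
    have hcq : c < q := by
      by_contra hq'
      push_neg at hq'
      have h5 : n * n * q ≤ n * n * c := Nat.mul_le_mul_left _ hq'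
      have h6 : q * (n * n) = n * n * q := Nat.mul_comm _ _
      linarith [hk.2, hk']
    obtain ⟨e0, he0, hfe0⟩ := hf.1.2.2 (show (c + 1) ∈ Set.Icc 1 q by
      rw [Set.mem_Icc]; omega)
    obtain ⟨u, v, huv, hadj, rfl⟩ := hshapeG e0 he0
    obtain ⟨i, j, hi, hj, hAij⟩ := hA.surj (b + 1) (by omega) (by omega)
    refine ⟨s((u, ⟨i, hi⟩), (v, ⟨j, hj⟩)), ((lexO G n).mem_edgeSet).mpr hadj, ?_⟩
    rw [hFeval _ _ _ _ huv, hfe0, Nat.add_sub_cancel, hAij]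
    linarith [hdm, hk']
  have hbij : Set.BijOn F (lexO G n).edgeSet (Set.Icc 1 (q * (n * n))) :=
    ⟨hmapsTo, hinjOn, hsurjOn⟩
  have hesize : esize (lexO G n) = q * (n * n) := by
    rw [esize, ← Set.ncard_image_of_injOn hinjOn, hbij.image_eq, ← Finset.coe_Icc,
      Set.ncard_coe_finset, Nat.card_Icc]
    omega
  -- neighbor finsets
  set tset : V → Finset V := fun u => (Set.toFinite (G.neighborSet u)).toFinset with htset
  have htcoe : ∀ u, (tset u : Set V) = G.neighborSet u := fun u => Set.Finite.coe_toFinset _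
  have htcard : ∀ u, (tset u).card = r := by
    intro u
    rw [htset]
    rw [← Set.ncard_eq_toFinset_card (G.neighborSet u) (Set.toFinite _)]
    exact hreg u
  have htcoe2 : ∀ (u : V) (i : Fin n),
      ((tset u ×ˢ (Finset.univ : Finset (Fin n)) : Finset (V × Fin n)) : Set (V × Fin n))
        = (lexO G n).neighborSet (u, i) := by
    intro u i
    rw [Finset.coe_product, htcoe, Finset.coe_univ, lexO_neighborSet]
  have hmemt : ∀ {u v : V}, v ∈ tset u → G.Adj u v := by
    intro u v hv
    have : v ∈ G.neighborSet u := by rw [← htcoe u]; exact_mod_cast hv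
    exact this
  -- the key sum identity
  have hkey : ∀ (u : V) (i : Fin n),
      vsum (lexO G n) F (u, i) + n * (n * n) * r = n * (n * n) * (vsum G f u) + r * S := by
    intro u i
    rw [vsum_eq (lexO G n) F (u, i) _ (htcoe2 u i), Finset.sum_product]
    have hterm : ∀ v ∈ tset u, (∑ jj : Fin n, F s((u, i), (v, jj)))
        = n * (n * n * (f s(u, v) - 1)) + S := by
      intro v hv
      have hadj := hmemt hv
      rcases lt_trichotomy u v with h | h | h
      · have : ∀ jj : Fin n, F s((u, i), (v, jj)) = n * n * (f s(u, v) - 1) + A i jj :=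
          fun jj => hFeval u v i jj h
        rw [Finset.sum_congr rfl (fun jj _ => this jj), Finset.sum_add_distrib,
          Finset.sum_const, Finset.card_univ, Fintype.card_fin, smul_eq_mul,
          Fin.sum_univ_eq_sum_range (fun t => A i t) n, hA.2.2.1 i i.isLt]
      · exact absurd h hadj.ne
      · have : ∀ jj : Fin n, F s((u, i), (v, jj)) = n * n * (f s(u, v) - 1) + A jj i := by
          intro jj
          rw [Sym2.eq_swap, hFeval v u jj i h, Sym2.eq_swap]
        rw [Finset.sum_congr rfl (fun jj _ => this jj), Finset.sum_add_distrib,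
          Finset.sum_const, Finset.card_univ, Fintype.card_fin, smul_eq_mul,
          Fin.sum_univ_eq_sum_range (fun t => A t i) n, hA.2.2.2 i i.isLt]
    rw [Finset.sum_congr rfl hterm, Finset.sum_add_distrib, Finset.sum_const, htcard u,
      smul_eq_mul, vsum_eq G f u (tset u) (htcoe u), Finset.mul_sum]
    have hconst : (∑ _v ∈ tset u, n * (n * n)) = r * (n * (n * n)) := by
      rw [Finset.sum_const, htcard u, smul_eq_mul]
    have hsum : (∑ v ∈ tset u, n * (n * n * (f s(u, v) - 1)))
        + (∑ _v ∈ tset u, n * (n * n)) = ∑ v ∈ tset u, n * (n * n) * f s(u, v) := by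
      rw [← Finset.sum_add_distrib]
      refine Finset.sum_congr rfl ?_
      intro v hv
      have hfv := hfb s(u, v) ((G.mem_edgeSet).mpr (hmemt hv))
      have h1 : n * (n * n * (f s(u, v) - 1)) + n * (n * n)
          = n * (n * n) * (f s(u, v) - 1 + 1) := by ring
      rw [h1, show f s(u, v) - 1 + 1 = f s(u, v) from by omega]
    linarith [hconst, hsum, Nat.mul_comm (n * (n * n)) r]
  -- adjacent vertices get distinct sums
  have hadjsum : ∀ ⦃p p' : V × Fin n⦄, (lexO G n).Adj p p' →
      vsum (lexO G n) F p ≠ vsum (lexO G n) F p' := by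
    rintro ⟨u, i⟩ ⟨v, j⟩ hadj heq
    have hadj' : G.Adj u v := hadj
    have h1 := hkey u i
    have h2 := hkey v j
    rw [heq] at h1
    have h3 := Nat.add_right_cancel (h1.symm.trans h2)
    exact hf.2 hadj' (Nat.eq_of_mul_eq_mul_left (by positivity) h3)
  refine ⟨F, ⟨by rw [hesize]; exact hbij, hadjsum⟩, ?_⟩
  -- colors
  have himg : (fun t => t + n * (n * n) * r) '' Set.range (vsum (lexO G n) F)
      = (fun t => n * (n * n) * t + r * S) '' Set.range (vsum G f) := by
    ext k
    simp only [Set.mem_image, Set.mem_range]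
    constructor
    · rintro ⟨_, ⟨⟨u, i⟩, rfl⟩, rfl⟩
      exact ⟨vsum G f u, ⟨u, rfl⟩, (hkey u i).symm⟩
    · rintro ⟨_, ⟨u, rfl⟩, rfl⟩
      exact ⟨vsum (lexO G n) F (u, ⟨0, by omega⟩), ⟨(u, ⟨0, by omega⟩), rfl⟩, hkey u _⟩
  have hinj1 : Function.Injective (fun t : ℕ => t + n * (n * n) * r) := by
    intro a b h
    have h' : a + n * (n * n) * r = b + n * (n * n) * r := h
    exact Nat.add_right_cancel h'
  have hinj2 : Function.Injective (fun t : ℕ => n * (n * n) * t + r * S) := by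
    intro a b h
    have h' : n * (n * n) * a + r * S = n * (n * n) * b + r * S := h
    exact Nat.eq_of_mul_eq_mul_left (by positivity) (Nat.add_right_cancel h')
  rw [colors, colors, ← Set.ncard_image_of_injective _ hinj1, himg,
    Set.ncard_image_of_injective _ hinj2]

end LocalAntimagic


open LocalAntimagic in
/-- For a regular graph `G` admitting a local antimagic labeling and `n ≥ 3`,
`χ(G[O_n]) ≤ χ_la(G[O_n]) ≤ χ_la(G)`; moreover if `χ(G) = χ_la(G)` then
`χ_la(G[O_n]) = χ_la(G)`. -/
theorem stmt17 {V : Type*} [Fintype V] (G : SimpleGraph V) (r n : ℕ) (hn : 3 ≤ n)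
    (hreg : ∀ v : V, (G.neighborSet v).ncard = r)
    (hex : ∃ f : Sym2 V → ℕ, IsLocalAntimagic G f) :
    (lexO G n).chromaticNumber ≤ (chiLA (lexO G n) : ℕ∞) ∧
      chiLA (lexO G n) ≤ chiLA G ∧
      (G.chromaticNumber = (chiLA G : ℕ∞) → chiLA (lexO G n) = chiLA G) := by
  classical
  obtain ⟨f0, hf0⟩ := hex
  have hSGne : {c | ∃ f : Sym2 V → ℕ, IsLocalAntimagic G f ∧ colors G f = c}.Nonempty :=
    ⟨colors G f0, f0, hf0, rfl⟩
  have hmemG : chiLA G ∈ {c | ∃ f : Sym2 V → ℕ, IsLocalAntimagic G f ∧ colors G f = c} :=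
    Nat.sInf_mem hSGne
  obtain ⟨f1, hf1, hc1⟩ := hmemG
  obtain ⟨F0, hF0, hcol0⟩ := construct G r n hn hreg hf1
  have h2 : chiLA (lexO G n) ≤ chiLA G := by
    have hm : chiLA G ∈ {c | ∃ F : Sym2 (V × Fin n) → ℕ,
        IsLocalAntimagic (lexO G n) F ∧ colors (lexO G n) F = c} :=
      ⟨F0, hF0, by rw [hcol0, hc1]⟩
    exact Nat.sInf_le hm
  have hHne : {c | ∃ F : Sym2 (V × Fin n) → ℕ,
      IsLocalAntimagic (lexO G n) F ∧ colors (lexO G n) F = c}.Nonempty :=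
    ⟨colors (lexO G n) F0, F0, hF0, rfl⟩
  obtain ⟨F1, hF1, hcF1'⟩ := Nat.sInf_mem hHne
  have hcF1 : colors (lexO G n) F1 = chiLA (lexO G n) := hcF1'
  have h1 : (lexO G n).chromaticNumber ≤ (chiLA (lexO G n) : ℕ∞) := by
    haveI : Fintype ↥(Set.range (vsum (lexO G n) F1)) := (Set.toFinite _).fintype
    let C : (lexO G n).Coloring (Set.range (vsum (lexO G n) F1)) :=
      SimpleGraph.Coloring.mk (fun w => ⟨vsum (lexO G n) F1 w, Set.mem_range_self w⟩)
        (fun {a b} hab h => hF1.2 hab (congrArg Subtype.val h))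
    have hcard : Fintype.card ↥(Set.range (vsum (lexO G n) F1)) = chiLA (lexO G n) := by
      rw [← hcF1, colors, ← Nat.card_coe_set_eq, Nat.card_eq_fintype_card]
    have hcol := C.colorable
    rw [hcard] at hcol
    exact hcol.chromaticNumber_le
  refine ⟨h1, h2, ?_⟩
  intro hEq
  have hhom : G →g (lexO G n) := ⟨fun v => (v, ⟨0, by omega⟩), fun {a b} hab => hab⟩
  have hmono : G.chromaticNumber ≤ (lexO G n).chromaticNumber :=
    SimpleGraph.chromaticNumber_le_of_forall_imp (fun m hc => Nonempty.map (fun C => C.comp hhom) hc)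
  have hchain : (chiLA G : ℕ∞) ≤ (chiLA (lexO G n) : ℕ∞) := by
    rw [← hEq]
    exact le_trans hmono h1
  have hfin : (chiLA (lexO G n) : ℕ∞) = (chiLA G : ℕ∞) :=
    le_antisymm (Nat.cast_le.mpr h2) hchain
  exact_mod_cast hfin
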